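/- Let n ≥ 3 and k ∈ ℕ. There is a constant C > 0, depending only on n and k, such that for all z = (x,y) ∈ ℝ × ℝ^{n-1} with z ≠ 0 and all y' ∈ ℝ^{n-1} with 2|z| ≤ |y'|, writing z' = (0,y') ∈ ℝⁿ, one has | x|z−z'|^{−n} − Σ_{m=1}^{k} x |z|^{m−1} |z'|^{−(m+n−1)} C_{m−1}^{n/2}(⟨z,z'⟩/(|z||z'|)) | ≤ C |x| |z|^{k} |z'|^{−(n+k)}. (Growth estimate for the modified double layer kernel: removing the first k terms of the harmonic-polynomial expansion improves the decay at infinity in z' by k orders.) -/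

import Mathlib

open MeasureTheory Real Filter
open scoped RealInnerProductSpace

/-- The Gegenbauer (ultraspherical) polynomial
`C_m^λ(u) = Σ_{k=0}^{⌊m/2⌋} (−1)^k (Γ(λ+m−k)/(Γ(λ) k! (m−2k)!)) (2u)^{m−2k}`. -/
noncomputable def gegenbauer (lam : ℝ) (m : ℕ) (u : ℝ) : ℝ :=
  ∑ k ∈ Finset.range (m / 2 + 1),
    (-1 : ℝ) ^ k *
      (Real.Gamma (lam + m - k) /
        (Real.Gamma lam * (Nat.factorial k : ℝ) * (Nat.factorial (m - 2 * k) : ℝ))) *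
      (2 * u) ^ (m - 2 * k)

/-!
With `t = ‖z‖ / ‖z'‖ ≤ 1/2` and `u = ⟪z, z'⟫ / (‖z‖ ‖z'‖) ∈ [-1, 1] one has
`‖z - z'‖ ^ (-n) = ‖z'‖ ^ (-n) (1 - 2ut + t²) ^ (-n/2)`, and the subtracted sum is `‖z'‖ ^ (-n)`
times the partial sum of order `k` of the Gegenbauer generating function `Σ C_m^{n/2}(u) t^m`.
So everything reduces to the bound `C t^k`, uniform in `u`, for the Taylor remainder of
`(1 - 2ut + t²) ^ (-λ)`. Expanding `(1 - (x + y)) ^ (-λ)` by the binomial series and regrouping by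
weighted degree (`x` of weight 1, `y` of weight 2) at `x = 2ut`, `y = -t²` identifies the Taylor
coefficients with `C_m^λ(u)`, and dominates them by the coefficients at `(x, y) = (2, 1)`, whose
series still converges at `t = 1/5`. This bounds the remainder for `t ≤ 1/5`; for
`1/5 < t ≤ 1/2` both terms are simply bounded.
-/

open Finset

section Partition

variable {α β : Type*} {S : α → Finset β}

theorem HasSum.sum_partition {γ : Type*} [AddCommMonoid γ] [TopologicalSpace γ] [ContinuousAdd γ]
    [RegularSpace γ] {f : β → γ} {s : γ} (hf : HasSum f s)
    (hS : ∀ b, ∃! a, b ∈ S a) : HasSum (fun a ↦ ∑ b ∈ S a, f b) s := by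
  refine (((Set.sigmaEquiv _ hS).hasSum_iff).mpr hf).sigma fun a ↦ ?_
  rw [← Finset.sum_attach]
  exact hasSum_fintype _

theorem summable_of_summable_sum_partition {f : β → ℝ} (hf : 0 ≤ f) (hS : ∀ b, ∃! a, b ∈ S a)
    (h : Summable fun a ↦ ∑ b ∈ S a, f b) : Summable f := by
  refine (summable_partition hf hS).2 ⟨fun a ↦ (hasSum_fintype _).summable, ?_⟩
  simpa [Finset.tsum_subtype', Finset.sum_attach] using h

end Partition

theorem hasSum_multichoose_mul_pow (lam : ℝ) {s : ℝ} (hs : |s| < 1) :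
    HasSum (fun k ↦ Ring.multichoose lam k * s ^ k) ((1 - s) ^ (-lam)) := by
  have h := (Real.one_div_one_sub_rpow_hasFPowerSeriesOnBall_zero lam).hasSum
    (y := s) (by simpa [enorm_eq_nnnorm, ← NNReal.coe_lt_coe] using hs)
  simp only [FormalMultilinearSeries.ofScalars_apply_eq, smul_eq_mul, zero_add,
    ← Ring.multichoose_eq] at h
  rwa [rpow_neg (by linarith [le_abs_self s]), ← one_div]

theorem Real.Gamma_add_natCast {s : ℝ} (hs : 0 < s) (k : ℕ) :
    Gamma (s + k) = k.factorial * Ring.multichoose s k * Gamma s := by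
  rw [← nsmul_eq_mul, Ring.factorial_nsmul_multichoose_eq_ascPochhammer,
    Polynomial.ascPochhammer_smeval_eq_eval]
  induction k with
  | zero => simp
  | succ k ih =>
    rw [Nat.cast_succ, ← add_assoc, Gamma_add_one (by positivity), ih, ascPochhammer_succ_eval]
    ring

theorem Ring.multichoose_pos {lam : ℝ} (hlam : 0 < lam) (k : ℕ) : 0 < Ring.multichoose lam k := by
  have h := Ring.factorial_nsmul_multichoose_eq_ascPochhammer lam k
  rw [Polynomial.ascPochhammer_smeval_eq_eval, nsmul_eq_mul] at h
  exact pos_of_mul_pos_right (h ▸ ascPochhammer_pos k lam hlam) (by positivity)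

noncomputable def binomialDoubleTerm (lam x y : ℝ) (p : ℕ × ℕ) : ℝ :=
  Ring.multichoose lam (p.1 + p.2) * ((p.1 + p.2).choose p.1 : ℝ) * x ^ p.1 * y ^ p.2

theorem sum_antidiagonal_binomialDoubleTerm (lam x y : ℝ) (k : ℕ) :
    ∑ p ∈ antidiagonal k, binomialDoubleTerm lam x y p = Ring.multichoose lam k * (x + y) ^ k := by
  rw [(Commute.all x y).add_pow', mul_sum]
  refine sum_congr rfl fun p hp ↦ ?_
  rw [binomialDoubleTerm, mem_antidiagonal.1 hp, nsmul_eq_mul]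
  ring

theorem hasSum_binomialDoubleTerm {lam : ℝ} (hlam : 0 < lam) {x y : ℝ} (hxy : |x| + |y| < 1) :
    HasSum (binomialDoubleTerm lam x y) ((1 - (x + y)) ^ (-lam)) := by
  have hdiag (p : ℕ × ℕ) : ∃! k : ℕ, p ∈ antidiagonal k := by simp
  have habs : |(|x| + |y|)| < 1 := by rwa [abs_of_nonneg (by positivity)]
  have hsummable : Summable (binomialDoubleTerm lam x y) := by
    refine Summable.of_norm_bounded (g := binomialDoubleTerm lam |x| |y|) ?_ fun p ↦ ?_
    · refine summable_of_summable_sum_partition (fun p ↦ ?_) hdiag ?_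
      · have := Ring.multichoose_pos hlam (p.1 + p.2)
        unfold binomialDoubleTerm
        positivity
      · simpa only [sum_antidiagonal_binomialDoubleTerm] using
          (hasSum_multichoose_mul_pow lam habs).summable
    · have := Ring.multichoose_pos hlam (p.1 + p.2)
      simp only [binomialDoubleTerm, norm_mul, norm_pow, Real.norm_eq_abs, abs_of_pos this,
        Nat.abs_cast, le_refl]
  have hrows := hsummable.hasSum.sum_partition hdiag
  simp only [sum_antidiagonal_binomialDoubleTerm] at hrows
  rw [(hasSum_multichoose_mul_pow lam ((abs_add_le x y).trans_lt hxy)).unique hrows]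
  exact hsummable.hasSum

-- The part of weighted degree `m` (`x` of weight 1, `y` of weight 2) of the expansion of
-- `(1 - (x + y)) ^ (-lam)`.
noncomputable def weightedBinomialTerm (lam x y : ℝ) (m : ℕ) : ℝ :=
  ∑ i ∈ range (m / 2 + 1),
    Ring.multichoose lam (m - i) * ((m - i).choose i : ℝ) * x ^ (m - 2 * i) * y ^ i

theorem mem_image_range_half_iff {m : ℕ} {p : ℕ × ℕ} :
    p ∈ (range (m / 2 + 1)).image (fun i ↦ (m - 2 * i, i)) ↔ p.1 + 2 * p.2 = m := by
  constructor
  · simp only [mem_image, mem_range]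
    rintro ⟨i, hi, rfl⟩
    omega
  · intro h
    exact mem_image.2 ⟨p.2, mem_range.2 (by omega), Prod.ext (by dsimp only; omega) rfl⟩

theorem hasSum_weightedBinomialTerm {lam : ℝ} (hlam : 0 < lam) {x y : ℝ} (hxy : |x| + |y| < 1) :
    HasSum (weightedBinomialTerm lam x y) ((1 - (x + y)) ^ (-lam)) := by
  have hweight (p : ℕ × ℕ) : ∃! m, p ∈ (range (m / 2 + 1)).image (fun i ↦ (m - 2 * i, i)) := by
    simp only [mem_image_range_half_iff, existsUnique_eq']
  convert (hasSum_binomialDoubleTerm hlam hxy).sum_partition hweight using 1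
  funext m
  rw [weightedBinomialTerm, sum_image fun i _ j _ h ↦ (Prod.ext_iff.1 h).2]
  refine sum_congr rfl fun i hi ↦ ?_
  have hdeg : m - 2 * i + i = m - i := by simp only [mem_range] at hi; omega
  rw [binomialDoubleTerm, hdeg, Nat.choose_symm_of_eq_add hdeg.symm]

theorem weightedBinomialTerm_mul_mul (lam c x y : ℝ) (m : ℕ) :
    weightedBinomialTerm lam (c * x) (c ^ 2 * y) m = c ^ m * weightedBinomialTerm lam x y m := by
  rw [weightedBinomialTerm, weightedBinomialTerm, mul_sum]
  refine sum_congr rfl fun i hi ↦ ?_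
  have hm : c ^ m = c ^ (m - 2 * i) * c ^ (2 * i) := by
    rw [← pow_add]; congr 1; simp only [mem_range] at hi; omega
  rw [mul_pow, mul_pow, ← pow_mul, hm]
  ring

theorem abs_weightedBinomialTerm_le {lam : ℝ} (hlam : 0 < lam) {x y a b : ℝ} (hx : |x| ≤ a)
    (hy : |y| ≤ b) (m : ℕ) : |weightedBinomialTerm lam x y m| ≤ weightedBinomialTerm lam a b m := by
  refine (abs_sum_le_sum_abs _ _).trans (sum_le_sum fun i _ ↦ ?_)
  have := Ring.multichoose_pos hlam (m - i)
  have ha : 0 ≤ a := (abs_nonneg x).trans hx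
  simp only [abs_mul, abs_pow, abs_of_pos this, Nat.abs_cast]
  gcongr

theorem hasSum_weightedBinomialTerm_mul_pow {lam : ℝ} (hlam : 0 < lam) {x y t : ℝ}
    (h : |t * x| + |t ^ 2 * y| < 1) :
    HasSum (fun m ↦ weightedBinomialTerm lam x y m * t ^ m)
      ((1 - (t * x + t ^ 2 * y)) ^ (-lam)) := by
  convert hasSum_weightedBinomialTerm hlam h using 1
  funext m
  rw [weightedBinomialTerm_mul_mul, mul_comm]

theorem gegenbauer_eq_weightedBinomialTerm {lam : ℝ} (hlam : 0 < lam) (m : ℕ) (u : ℝ) :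
    gegenbauer lam m u = weightedBinomialTerm lam (2 * u) (-1) m := by
  refine sum_congr rfl fun i hi ↦ ?_
  have hi : 2 * i ≤ m := by simp only [mem_range] at hi; omega
  have hcast : lam + m - i = lam + ↑(m - i) := by push_cast [show i ≤ m by omega]; ring
  have hfact := Nat.choose_mul_factorial_mul_factorial (show i ≤ m - i by omega)
  rw [show m - i - i = m - 2 * i by omega] at hfact
  have := Gamma_pos_of_pos hlam
  rw [hcast, Real.Gamma_add_natCast hlam, ← hfact]
  push_cast
  field_simp

theorem abs_gegenbauer_le {lam : ℝ} (hlam : 0 < lam) (m : ℕ) {u : ℝ} (hu : |u| ≤ 1) :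
    |gegenbauer lam m u| ≤ weightedBinomialTerm lam 2 1 m := by
  rw [gegenbauer_eq_weightedBinomialTerm hlam]
  exact abs_weightedBinomialTerm_le hlam (by rw [abs_mul, abs_two]; linarith) (by norm_num) m

theorem hasSum_gegenbauer_mul_pow {lam : ℝ} (hlam : 0 < lam) {u t : ℝ} (hu : |u| ≤ 1)
    (ht : 0 ≤ t) (ht1 : 2 * t + t ^ 2 < 1) :
    HasSum (fun m ↦ gegenbauer lam m u * t ^ m) ((1 - 2 * u * t + t ^ 2) ^ (-lam)) := by
  have h : |t * (2 * u)| + |t ^ 2 * -1| < 1 := by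
    simp only [abs_mul, abs_neg, abs_one, mul_one, abs_two, abs_pow, abs_of_nonneg ht]
    nlinarith
  convert hasSum_weightedBinomialTerm_mul_pow hlam h using 2
  · rw [gegenbauer_eq_weightedBinomialTerm hlam]
  · ring

theorem abs_sub_sum_range_le_of_hasSum {a b : ℕ → ℝ} {s M r t : ℝ}
    (hs : HasSum (fun m ↦ a m * t ^ m) s) (hM : HasSum (fun m ↦ b m * r ^ m) M)
    (hab : ∀ m, |a m| ≤ b m) (ht : 0 ≤ t) (hr : 0 < r) (htr : t ≤ r) (k : ℕ) :
    |s - ∑ m ∈ range k, a m * t ^ m| ≤ M * (t / r) ^ k := by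
  have htail : s - ∑ m ∈ range k, a m * t ^ m = ∑' i, a (i + k) * t ^ (i + k) := by
    rw [← hs.tsum_eq, ← hs.summable.sum_add_tsum_nat_add k, add_sub_cancel_left]
  have hterm (i : ℕ) : ‖a (i + k) * t ^ (i + k)‖ ≤ b (i + k) * r ^ (i + k) * (t / r) ^ k := by
    have hpow : t ^ (i + k) ≤ r ^ (i + k) * (t / r) ^ k := by
      rw [div_pow, pow_add, pow_add, mul_assoc, mul_div_cancel₀ _ (by positivity)]
      gcongr
    have hb : 0 ≤ b (i + k) := (abs_nonneg _).trans (hab _)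
    calc ‖a (i + k) * t ^ (i + k)‖ = |a (i + k)| * t ^ (i + k) := by
          rw [norm_mul, norm_pow, Real.norm_eq_abs, Real.norm_eq_abs, abs_of_nonneg ht]
      _ ≤ b (i + k) * (r ^ (i + k) * (t / r) ^ k) := by gcongr; exact hab _
      _ = b (i + k) * r ^ (i + k) * (t / r) ^ k := by ring
  have hb (m : ℕ) : 0 ≤ b m * r ^ m := mul_nonneg ((abs_nonneg _).trans (hab m)) (by positivity)
  have htailM : ∑' i, b (i + k) * r ^ (i + k) ≤ M :=
    hM.tsum_eq ▸ tsum_comp_le_tsum_of_inj hM.summable hb (add_left_injective k)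
  have hmajorant := (hM.summable.comp_injective (add_left_injective k)).hasSum.mul_right
    ((t / r) ^ k)
  rw [htail]
  exact (tsum_of_norm_bounded hmajorant hterm).trans (by gcongr; exact htailM)

theorem exists_abs_rpow_sub_sum_gegenbauer_le {lam : ℝ} (hlam : 0 < lam) (k : ℕ) :
    ∃ C, 0 < C ∧ ∀ u t : ℝ, |u| ≤ 1 → 0 ≤ t → t ≤ 1 / 2 →
      |(1 - 2 * u * t + t ^ 2) ^ (-lam) - ∑ j ∈ range k, gegenbauer lam j u * t ^ j|
        ≤ C * t ^ k := by
  set M := ((14 : ℝ) / 25) ^ (-lam)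
  set A := ((1 : ℝ) / 4) ^ (-lam)
  set B := ∑ j ∈ range k, weightedBinomialTerm lam 2 1 j
  have hM : HasSum (fun m ↦ weightedBinomialTerm lam 2 1 m * (1 / 5) ^ m) M := by
    convert hasSum_weightedBinomialTerm_mul_pow hlam (x := 2) (y := 1) (t := 1 / 5) (by norm_num)
      using 2
    norm_num
  have hM0 : 0 < M := by positivity
  have hA0 : 0 < A := by positivity
  have hB : 0 ≤ B := sum_nonneg fun j _ ↦ (abs_nonneg _).trans
    (abs_weightedBinomialTerm_le hlam (x := 2) (y := 1) (by norm_num) (by norm_num) j)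
  refine ⟨5 ^ k * (M + A + B), by positivity, fun u t hu ht ht2 ↦ ?_⟩
  rcases le_or_gt t (1 / 5) with hsmall | hlarge
  · have hG := hasSum_gegenbauer_mul_pow hlam hu ht (by nlinarith)
    calc _ ≤ M * (t / (1 / 5)) ^ k :=
          abs_sub_sum_range_le_of_hasSum hG hM (fun m ↦ abs_gegenbauer_le hlam m hu) ht
            (by norm_num) hsmall k
      _ = 5 ^ k * M * t ^ k := by rw [show t / (1 / 5) = 5 * t by ring, mul_pow]; ring
      _ ≤ 5 ^ k * (M + A + B) * t ^ k := by gcongr; linarith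
  · have hQ : 1 / 4 ≤ 1 - 2 * u * t + t ^ 2 := by nlinarith [abs_le.1 hu]
    have hf : |(1 - 2 * u * t + t ^ 2) ^ (-lam)| ≤ A := by
      rw [abs_of_pos (rpow_pos_of_pos (by linarith) _)]
      exact rpow_le_rpow_of_nonpos (by norm_num) hQ (by linarith)
    have hP : |∑ j ∈ range k, gegenbauer lam j u * t ^ j| ≤ B := by
      refine (abs_sum_le_sum_abs _ _).trans (sum_le_sum fun j _ ↦ ?_)
      rw [abs_mul, abs_pow, abs_of_nonneg ht]
      exact (mul_le_of_le_one_right (abs_nonneg _) (pow_le_one₀ ht (by linarith))).trans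
        (abs_gegenbauer_le hlam j hu)
    calc _ ≤ A + B := (abs_sub _ _).trans (add_le_add hf hP)
      _ ≤ M + A + B := by linarith
      _ ≤ (M + A + B) * (5 * t) ^ k :=
          le_mul_of_one_le_right (by linarith) (one_le_pow₀ (by linarith))
      _ = 5 ^ k * (M + A + B) * t ^ k := by ring

section InnerProductSpace

variable {E : Type*} [NormedAddCommGroup E] [InnerProductSpace ℝ E]

theorem norm_sub_sq_eq_mul (z w : E) (hw : w ≠ 0) :
    ‖z - w‖ ^ 2 = ‖w‖ ^ 2 *
      (1 - 2 * (⟪z, w⟫ / (‖z‖ * ‖w‖)) * (‖z‖ / ‖w‖) + (‖z‖ / ‖w‖) ^ 2) := by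
  rw [norm_sub_sq_real]
  rcases eq_or_ne z 0 with rfl | hz
  · simp
  · have := norm_pos_iff.2 hz
    have := norm_pos_iff.2 hw
    field_simp
    ring

theorem norm_sub_rpow_neg_eq_mul (z w : E) (hw : w ≠ 0) (s : ℝ) :
    ‖z - w‖ ^ (-s) = ‖w‖ ^ (-s) *
      (1 - 2 * (⟪z, w⟫ / (‖z‖ * ‖w‖)) * (‖z‖ / ‖w‖) + (‖z‖ / ‖w‖) ^ 2) ^ (-(s / 2)) := by
  have h := norm_sub_sq_eq_mul z w hw
  have hQ := (mul_nonneg_iff_of_pos_left (by positivity)).1 (h ▸ sq_nonneg ‖z - w‖)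
  have hsq (a : ℝ) (ha : 0 ≤ a) : a ^ (-s) = (a ^ 2) ^ (-(s / 2)) := by
    rw [← rpow_natCast, ← rpow_mul ha]
    ring_nf
  rw [hsq _ (norm_nonneg _), h, mul_rpow (by positivity) hQ, ← hsq _ (norm_nonneg _)]

end InnerProductSpace

theorem pow_mul_rpow_neg_add {R : ℝ} (hR : 0 < R) (r s : ℝ) (j : ℕ) :
    r ^ j * R ^ (-(s + j)) = (r / R) ^ j * R ^ (-s) := by
  rw [div_pow, rpow_neg hR.le, rpow_neg hR.le, rpow_add hR, rpow_natCast]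
  field_simp

theorem sum_Icc_mul_pow_mul_rpow_neg {R : ℝ} (hR : 0 < R) (c r s : ℝ) (f : ℕ → ℝ) (k : ℕ) :
    ∑ m ∈ Icc 1 k, c * r ^ (m - 1) * R ^ (-((m : ℝ) + s - 1)) * f (m - 1) =
      c * R ^ (-s) * ∑ j ∈ range k, f j * (r / R) ^ j := by
  rw [← Ico_add_one_right_eq_Icc, sum_Ico_eq_sum_range, mul_sum]
  refine sum_congr rfl fun j _ ↦ ?_
  have := pow_mul_rpow_neg_add hR r s j
  rw [add_tsub_cancel_left, Nat.cast_add, Nat.cast_one, show (1 + j + s - 1 : ℝ) = s + j by ring]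
  linear_combination c * f j * this

/-- Growth estimate for the modified double layer kernel: removing the first `k` terms of the
harmonic-polynomial expansion of `x|z-z'|^{-n}` (with `x = z 0`, `z'` in the boundary
hyperplane, `2|z| ≤ |z'|`) improves the decay at infinity in `z'` by `k` orders. -/
theorem modified_double_kernel_estimate (n : ℕ) (hn : 3 ≤ n) (k : ℕ) :
    ∃ C : ℝ, 0 < C ∧ ∀ z z' : EuclideanSpace ℝ (Fin n), z ≠ 0 →
      z' ⟨0, by omega⟩ = 0 → 2 * ‖z‖ ≤ ‖z'‖ →
      |z ⟨0, by omega⟩ * ‖z - z'‖ ^ (-(n : ℝ)) -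
          ∑ m ∈ Finset.Icc 1 k,
            z ⟨0, by omega⟩ * ‖z‖ ^ (m - 1) * ‖z'‖ ^ (-((m : ℝ) + n - 1)) *
              gegenbauer ((n : ℝ) / 2) (m - 1) (⟪z, z'⟫ / (‖z‖ * ‖z'‖))|
        ≤ C * |z ⟨0, by omega⟩| * ‖z‖ ^ k * ‖z'‖ ^ (-((n : ℝ) + k)) := by
  obtain ⟨C, hC, hbound⟩ := exists_abs_rpow_sub_sum_gegenbauer_le (lam := n / 2) (by positivity) k
  refine ⟨C, hC, fun z z' hz _ hzz' ↦ ?_⟩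
  have hR : 0 < ‖z'‖ := by linarith [norm_pos_iff.2 hz]
  set x := z ⟨0, by omega⟩
  set t := ‖z‖ / ‖z'‖ with ht_def
  set u := ⟪z, z'⟫ / (‖z‖ * ‖z'‖)
  have hkernel : ‖z - z'‖ ^ (-(n : ℝ)) =
      ‖z'‖ ^ (-(n : ℝ)) * (1 - 2 * u * t + t ^ 2) ^ (-((n : ℝ) / 2)) :=
    norm_sub_rpow_neg_eq_mul z z' (norm_pos_iff.1 hR) n
  have hsum : ∑ m ∈ Icc 1 k, x * ‖z‖ ^ (m - 1) * ‖z'‖ ^ (-((m : ℝ) + n - 1)) *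
      gegenbauer (n / 2) (m - 1) u =
      x * ‖z'‖ ^ (-(n : ℝ)) * ∑ j ∈ range k, gegenbauer (n / 2) j u * t ^ j :=
    sum_Icc_mul_pow_mul_rpow_neg hR x ‖z‖ n (fun j ↦ gegenbauer (n / 2) j u) k
  have ht : t ≤ 1 / 2 := by rw [div_le_iff₀ hR]; linarith
  calc _ = |x * ‖z'‖ ^ (-(n : ℝ)) * ((1 - 2 * u * t + t ^ 2) ^ (-((n : ℝ) / 2)) -
        ∑ j ∈ range k, gegenbauer (n / 2) j u * t ^ j)| := by
        rw [hkernel, hsum, ← mul_assoc, ← mul_sub]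
    _ = |x| * ‖z'‖ ^ (-(n : ℝ)) * |(1 - 2 * u * t + t ^ 2) ^ (-((n : ℝ) / 2)) -
        ∑ j ∈ range k, gegenbauer (n / 2) j u * t ^ j| := by
        rw [abs_mul, abs_mul, abs_of_pos (rpow_pos_of_pos hR _)]
    _ ≤ |x| * ‖z'‖ ^ (-(n : ℝ)) * (C * t ^ k) := by
        gcongr
        exact hbound u t (abs_real_inner_div_norm_mul_norm_le_one z z') (by positivity) ht
    _ = _ := by rw [mul_assoc (C * |x|), pow_mul_rpow_neg_add hR, ← ht_def]; ring
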